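/- (Eckart–Young, best rank-k approximation) Let n ≥ 1, let σ_1 ≥ σ_2 ≥ ⋯ ≥ σ_n ≥ 0 be real numbers, let U, V ∈ ℝ^{n×n} be orthogonal matrices (UᵀU = I and VᵀV = I), and let W = U · diag(σ_1, …, σ_n) · Vᵀ. Then for every 0 ≤ k ≤ n, the value Σ_{i=k+1}^{n} σ_i² is the least element of the set { ‖W − B‖_F² : B ∈ ℝ^{n×n}, rank(B) ≤ k }, attained by the truncation B = U · diag(σ_1, …, σ_k, 0, …, 0) · Vᵀ. -/

import Mathlib

open scoped BigOperators
open Matrix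

/-- Squared Frobenius norm of a real matrix: `‖M‖_F² = ∑_{i,j} M_{ij}²`. -/
def frobSq {m n : ℕ} (M : Matrix (Fin m) (Fin n) ℝ) : ℝ :=
  ∑ i, ∑ j, (M i j) ^ 2

lemma frobSq_eq_trace {m n : ℕ} (M : Matrix (Fin m) (Fin n) ℝ) :
    frobSq M = (Mᵀ * M).trace := by
  rw [frobSq, Matrix.trace, Finset.sum_comm]
  simp [Matrix.diag, Matrix.mul_apply, sq]

lemma frobSq_nonneg {m n : ℕ} (M : Matrix (Fin m) (Fin n) ℝ) : 0 ≤ frobSq M := by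
  apply Finset.sum_nonneg; intro i _
  exact Finset.sum_nonneg fun j _ => sq_nonneg _

lemma frobSq_orth_left {n : ℕ} (Q M : Matrix (Fin n) (Fin n) ℝ) (hQ : Qᵀ * Q = 1) :
    frobSq (Q * M) = frobSq M := by
  rw [frobSq_eq_trace, frobSq_eq_trace, Matrix.transpose_mul]
  rw [show Mᵀ * Qᵀ * (Q * M) = Mᵀ * (Qᵀ * Q) * M by noncomm_ring, hQ, Matrix.mul_one]

lemma frobSq_orth_right {n : ℕ} (V M : Matrix (Fin n) (Fin n) ℝ) (hV : Vᵀ * V = 1) :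
    frobSq (M * Vᵀ) = frobSq M := by
  rw [frobSq_eq_trace, frobSq_eq_trace, Matrix.transpose_mul, Matrix.transpose_transpose]
  rw [show V * Mᵀ * (M * Vᵀ) = (V * (Mᵀ * M)) * Vᵀ by noncomm_ring, Matrix.trace_mul_comm,
    show Vᵀ * (V * (Mᵀ * M)) = (Vᵀ * V) * (Mᵀ * M) by noncomm_ring, hV, Matrix.one_mul]
open scoped BigOperators

lemma card_filter_lt {n k : ℕ} (hk : k ≤ n) :
    (Finset.univ.filter (fun i : Fin n => (i : ℕ) < k)).card = k := by
  have : (Finset.univ.filter (fun i : Fin n => (i : ℕ) < k)).card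
      = ((Finset.univ.filter (fun i : Fin n => (i : ℕ) < k)).image Fin.val).card :=
    (Finset.card_image_of_injective _ Fin.val_injective).symm
  rw [this]
  have himg : (Finset.univ.filter (fun i : Fin n => (i : ℕ) < k)).image Fin.val
      = Finset.range k := by
    ext a
    simp only [Finset.mem_image, Finset.mem_filter, Finset.mem_univ, true_and,
      Finset.mem_range]
    constructor
    · rintro ⟨i, hi, rfl⟩; exact hi
    · intro ha
      exact ⟨⟨a, lt_of_lt_of_le ha hk⟩, ha, rfl⟩
  rw [himg, Finset.card_range]
  
lemma card_filter_ge {n k : ℕ} (hk : k ≤ n) :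
    (Finset.univ.filter (fun i : Fin n => k ≤ (i : ℕ))).card = n - k := by
  have h := Finset.card_filter_add_card_filter_not
    (s := (Finset.univ : Finset (Fin n))) (p := fun i : Fin n => (i : ℕ) < k)
  simp only [not_lt] at h
  rw [card_filter_lt hk] at h
  simp only [Finset.card_univ, Fintype.card_fin] at h
  omega

lemma scalar_key {n k : ℕ} (hk : k ≤ n) (σ : Fin n → ℝ) (hσdec : Antitone σ)
    (hσnn : ∀ i, 0 ≤ σ i) (t : Fin n → ℝ) (ht0 : ∀ i, 0 ≤ t i) (ht1 : ∀ i, t i ≤ 1)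
    (htsum : (n : ℝ) - k ≤ ∑ i, t i) :
    ∑ i ∈ Finset.univ.filter (fun i : Fin n => k ≤ (i : ℕ)), σ i ^ 2
      ≤ ∑ i, σ i ^ 2 * t i := by
  rcases eq_or_lt_of_le hk with heq | hkn
  · have hem : (Finset.univ.filter (fun i : Fin n => k ≤ (i : ℕ))) = ∅ := by
      ext i
      simp only [Finset.mem_filter, Finset.mem_univ, true_and, Finset.notMem_empty,
        iff_false]
      intro h; have := i.2; omega
    rw [hem, Finset.sum_empty]
    exact Finset.sum_nonneg fun i _ => mul_nonneg (sq_nonneg _) (ht0 i)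
  · set K : Fin n := ⟨k, hkn⟩ with hK
    set s : ℝ := σ K with hs
    set A := Finset.univ.filter (fun i : Fin n => (i : ℕ) < k) with hA
    set C := Finset.univ.filter (fun i : Fin n => k ≤ (i : ℕ)) with hC
    have hsplit : ∀ f : Fin n → ℝ, ∑ i, f i = ∑ i ∈ A, f i + ∑ i ∈ C, f i := by
      intro f
      rw [hA, hC]
      rw [← Finset.sum_filter_add_sum_filter_not Finset.univ (fun i : Fin n => (i:ℕ) < k)]
      congr 1
      apply Finset.sum_congr _ (fun _ _ => rfl)
      ext i; simp [not_lt]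
    -- bound on A : s^2 * t i ≤ σ i ^2 * t i
    have hAbound : s ^ 2 * ∑ i ∈ A, t i ≤ ∑ i ∈ A, σ i ^ 2 * t i := by
      rw [Finset.mul_sum]
      apply Finset.sum_le_sum
      intro i hi
      have hik : (i : ℕ) ≤ k := le_of_lt (by simpa [hA] using hi)
      have : s ≤ σ i := hσdec (by simpa [hK, Fin.le_def] using hik)
      exact mul_le_mul_of_nonneg_right (pow_le_pow_left₀ (hσnn K) this 2) (ht0 i)
    -- bound on C : σ i ^2 (1 - t i) ≤ s^2 (1 - t i)
    have hCbound : ∑ i ∈ C, σ i ^ 2 * (1 - t i) ≤ s ^ 2 * ∑ i ∈ C, (1 - t i) := by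
      rw [Finset.mul_sum]
      apply Finset.sum_le_sum
      intro i hi
      have hik : k ≤ (i : ℕ) := by simpa [hC] using hi
      have : σ i ≤ s := hσdec (by simpa [hK, Fin.le_def] using hik)
      exact mul_le_mul_of_nonneg_right (pow_le_pow_left₀ (hσnn i) this 2) (by linarith [ht1 i])
    have hcardC : (C.card : ℝ) = (n : ℝ) - k := by
      rw [hC, card_filter_ge hk]; push_cast [Nat.cast_sub hk]; ring
    have hsum1C : ∑ i ∈ C, (1 - t i) = ((n : ℝ) - k) - ∑ i ∈ C, t i := by
      rw [Finset.sum_sub_distrib, Finset.sum_const, nsmul_eq_mul, mul_one, hcardC]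
    have htA : ∑ i ∈ C, (1 - t i) ≤ ∑ i ∈ A, t i := by
      have := hsplit t
      rw [hsum1C]; linarith
    have hs2 : (0:ℝ) ≤ s ^ 2 := sq_nonneg _
    have key : ∑ i ∈ C, σ i ^ 2 * (1 - t i) ≤ ∑ i ∈ A, σ i ^ 2 * t i := by
      calc ∑ i ∈ C, σ i ^ 2 * (1 - t i) ≤ s ^ 2 * ∑ i ∈ C, (1 - t i) := hCbound
        _ ≤ s ^ 2 * ∑ i ∈ A, t i := mul_le_mul_of_nonneg_left htA hs2
        _ ≤ ∑ i ∈ A, σ i ^ 2 * t i := hAbound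
    have hexp : ∑ i ∈ C, σ i ^ 2 * (1 - t i) = ∑ i ∈ C, σ i ^ 2 - ∑ i ∈ C, σ i ^ 2 * t i := by
      rw [← Finset.sum_sub_distrib]; apply Finset.sum_congr rfl; intros; ring
    have hCt : ∑ i ∈ C, σ i ^ 2 * t i ≤ ∑ i, σ i ^ 2 * t i := by
      rw [hsplit (fun i => σ i ^ 2 * t i)]
      have : 0 ≤ ∑ i ∈ A, σ i ^ 2 * t i :=
        Finset.sum_nonneg fun i _ => mul_nonneg (sq_nonneg _) (ht0 i)
      linarith
    rw [hsplit (fun i => σ i ^ 2 * t i)]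
    linarith [hexp, key]
open scoped BigOperators

lemma exists_proj {n k : ℕ} (B : Matrix (Fin n) (Fin n) ℝ) (hB : B.rank ≤ k) :
    ∃ P : Matrix (Fin n) (Fin n) ℝ, Pᵀ = P ∧ P * P = P ∧ P * B = B ∧ P.trace ≤ (k : ℝ) := by
  classical
  set S₀ : Submodule ℝ (Fin n → ℝ) := LinearMap.range B.mulVecLin with hS₀
  let L : WithLp 2 (Fin n → ℝ) ≃ₗ[ℝ] (Fin n → ℝ) := WithLp.linearEquiv 2 ℝ (Fin n → ℝ)
  set S : Submodule ℝ (EuclideanSpace ℝ (Fin n)) := S₀.map (L.symm : (Fin n → ℝ) →ₗ[ℝ] _)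
    with hS
  have hfin : Module.finrank ℝ S = B.rank := LinearEquiv.finrank_map_eq L.symm S₀
  let b := stdOrthonormalBasis ℝ S
  let w : Fin (Module.finrank ℝ S) → (Fin n → ℝ) :=
    fun i => L ((b i : S) : EuclideanSpace ℝ (Fin n))
  have horth : ∀ i j, (∑ a, w i a * w j a) = if i = j then (1:ℝ) else 0 := by
    intro i j
    have h1 : inner ℝ ((b i : S) : EuclideanSpace ℝ (Fin n)) ((b j : S) : EuclideanSpace ℝ (Fin n))
        = if i = j then (1:ℝ) else 0 := by
      rw [← Submodule.coe_inner]
      exact orthonormal_iff_ite.mp b.orthonormal i j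
    rw [← h1, PiLp.inner_apply]
    apply Finset.sum_congr rfl
    intro a _
    simp only [RCLike.inner_apply, starRingEnd_apply, star_trivial]
    exact mul_comm _ _
  have hmem : ∀ i, w i ∈ S₀ := by
    intro i
    have h2 : ((b i : S) : EuclideanSpace ℝ (Fin n)) ∈ S := (b i : S).2
    obtain ⟨y, hy, hey⟩ := Submodule.mem_map.mp h2
    have : w i = y := by
      simp only [w, ← hey]
      exact L.apply_symm_apply y
    rwa [this]
  have hspan : ∀ y ∈ S₀, ∃ c : Fin (Module.finrank ℝ S) → ℝ, y = ∑ i, c i • w i := by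
    intro y hy
    have hyS : (L.symm y : EuclideanSpace ℝ (Fin n)) ∈ S :=
      Submodule.mem_map_of_mem hy
    refine ⟨fun i => b.repr ⟨L.symm y, hyS⟩ i, ?_⟩
    have h3 := b.sum_repr ⟨L.symm y, hyS⟩
    have h4 : (((∑ i, b.repr ⟨L.symm y, hyS⟩ i • b i : S)) : EuclideanSpace ℝ (Fin n))
        = L.symm y := by rw [h3]
    have h5 : ((∑ i, b.repr ⟨L.symm y, hyS⟩ i • b i : S) : EuclideanSpace ℝ (Fin n))
        = ∑ i, b.repr ⟨L.symm y, hyS⟩ i • ((b i : S) : EuclideanSpace ℝ (Fin n)) := by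
      push_cast
      rfl
    rw [h5] at h4
    calc y = L (L.symm y) := (L.apply_symm_apply y).symm
      _ = L (∑ i, b.repr ⟨L.symm y, hyS⟩ i • ((b i : S) : EuclideanSpace ℝ (Fin n))) := by
          rw [h4]
      _ = ∑ i, b.repr ⟨L.symm y, hyS⟩ i • w i := by
          rw [map_sum]
          apply Finset.sum_congr rfl
          intro i _
          exact L.map_smul _ _
  -- the projection matrix
  set Q : Matrix (Fin n) (Fin (Module.finrank ℝ S)) ℝ := Matrix.of (fun a i => w i a) with hQ
  set P : Matrix (Fin n) (Fin n) ℝ := Q * Qᵀ with hP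
  have hQTQ : Qᵀ * Q = 1 := by
    ext i j
    rw [Matrix.mul_apply, Matrix.one_apply]
    simpa [Matrix.transpose_apply, hQ] using horth i j
  have hsym : Pᵀ = P := by rw [hP, Matrix.transpose_mul, Matrix.transpose_transpose]
  have hidem : P * P = P := by
    rw [hP, Matrix.mul_assoc, ← Matrix.mul_assoc Qᵀ Q Qᵀ, hQTQ, Matrix.one_mul]
  have hPw : ∀ i, P *ᵥ (w i) = w i := by
    intro i
    rw [hP, ← Matrix.mulVec_mulVec]
    have h6 : Qᵀ *ᵥ w i = Pi.single i 1 := by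
      ext j
      rw [Matrix.mulVec, dotProduct]
      simp only [Matrix.transpose_apply, hQ, Matrix.of_apply]
      rw [horth j i, Pi.single_apply]
    rw [h6]
    ext a
    rw [Matrix.mulVec, dotProduct]
    simp [Pi.single_apply, hQ, mul_ite]
  have hfix : ∀ y ∈ S₀, P *ᵥ y = y := by
    intro y hy
    obtain ⟨c, rfl⟩ := hspan y hy
    rw [show P *ᵥ (∑ i, c i • w i) = P.mulVecLin (∑ i, c i • w i) from rfl, map_sum]
    apply Finset.sum_congr rfl
    intro i _
    rw [LinearMap.map_smul, Matrix.mulVecLin_apply, hPw]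
  have hPB : P * B = B := by
    ext i j
    have hcol : (fun l => B l j) ∈ S₀ := ⟨Pi.single j 1, by
      ext l
      rw [Matrix.mulVecLin_apply, Matrix.mulVec, dotProduct]
      simp [Pi.single_apply, mul_ite]⟩
    have := congrFun (hfix _ hcol) i
    simpa [Matrix.mulVec, dotProduct, Matrix.mul_apply] using this
  refine ⟨P, hsym, hidem, hPB, ?_⟩
  have htr : P.trace = (Module.finrank ℝ S : ℝ) := by
    rw [Matrix.trace]
    simp only [Matrix.diag, hP, Matrix.mul_apply, Matrix.transpose_apply, hQ, Matrix.of_apply]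
    rw [Finset.sum_comm]
    have : ∀ i : Fin (Module.finrank ℝ S), (∑ a, w i a * w i a) = 1 := by
      intro i; rw [horth i i]; simp
    rw [Finset.sum_congr rfl (fun i _ => this i)]
    simp
  rw [htr, hfin]
  exact_mod_cast hB

lemma frobSq_proj_le {n m : ℕ} (P : Matrix (Fin n) (Fin n) ℝ) (hsym : Pᵀ = P)
    (hidem : P * P = P) (M : Matrix (Fin n) (Fin m) ℝ) :
    frobSq (((1 : Matrix (Fin n) (Fin n) ℝ) - P) * M) ≤ frobSq M := by
  set R : Matrix (Fin n) (Fin n) ℝ := 1 - P with hR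
  have hRsym : Rᵀ = R := by rw [hR, Matrix.transpose_sub, Matrix.transpose_one, hsym]
  have hRidem : R * R = R := by
    rw [hR, Matrix.sub_mul, Matrix.one_mul, Matrix.mul_sub, Matrix.mul_one, hidem]
    abel
  have key : ∀ (A : Matrix (Fin n) (Fin n) ℝ), Aᵀ = A → A * A = A →
      frobSq (A * M) = (Mᵀ * (A * M)).trace := by
    intro A hs hi
    rw [frobSq_eq_trace, Matrix.transpose_mul, hs, Matrix.mul_assoc,
      ← Matrix.mul_assoc A A M, hi]
  have h1 : frobSq (P * M) + frobSq (R * M) = frobSq M := by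
    rw [key P hsym hidem, key R hRsym hRidem, ← Matrix.trace_add, ← Matrix.mul_add,
      ← Matrix.add_mul, show P + R = 1 by rw [hR]; abel, Matrix.one_mul,
      frobSq_eq_trace M]
  linarith [frobSq_nonneg (P * M)]

lemma diag_key {n k : ℕ} (hk : k ≤ n) (σ : Fin n → ℝ) (hσdec : Antitone σ)
    (hσnn : ∀ i, 0 ≤ σ i) (B : Matrix (Fin n) (Fin n) ℝ) (hB : B.rank ≤ k) :
    ∑ i ∈ Finset.univ.filter (fun i : Fin n => k ≤ (i : ℕ)), σ i ^ 2
      ≤ frobSq (Matrix.diagonal σ - B) := by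
  obtain ⟨P, hsym, hidem, hPB, htr⟩ := exists_proj B hB
  set R : Matrix (Fin n) (Fin n) ℝ := 1 - P with hR
  have hRsym : Rᵀ = R := by rw [hR, Matrix.transpose_sub, Matrix.transpose_one, hsym]
  have hRidem : R * R = R := by
    rw [hR, Matrix.sub_mul, Matrix.one_mul, Matrix.mul_sub, Matrix.mul_one, hidem]
    abel
  have hsymm_ap : ∀ a b : Fin n, R a b = R b a := by
    intro a b
    conv_lhs => rw [← hRsym]
    rw [Matrix.transpose_apply]
  have hPsymm_ap : ∀ a b : Fin n, P a b = P b a := by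
    intro a b
    conv_lhs => rw [← hsym]
    rw [Matrix.transpose_apply]
  have hdiag : ∀ j, R j j = ∑ i, (R i j) ^ 2 := by
    intro j
    have h0 : R j j = (R * R) j j := by rw [hRidem]
    rw [h0, Matrix.mul_apply]
    apply Finset.sum_congr rfl
    intro i _
    rw [sq, hsymm_ap j i]
  have hPdiag : ∀ j, 0 ≤ P j j := by
    intro j
    have h0 : P j j = (P * P) j j := by rw [hidem]
    have h1 : (P * P) j j = ∑ i, (P i j) ^ 2 := by
      rw [Matrix.mul_apply]
      apply Finset.sum_congr rfl
      intro i _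
      rw [sq, hPsymm_ap j i]
    rw [h0, h1]
    exact Finset.sum_nonneg fun i _ => sq_nonneg _
  have hR_one : ∀ j : Fin n, R j j = 1 - P j j := by
    intro j
    rw [hR, Matrix.sub_apply, Matrix.one_apply_eq]
  have ht0 : ∀ j, 0 ≤ R j j := fun j => (hdiag j) ▸ Finset.sum_nonneg fun i _ => sq_nonneg _
  have ht1 : ∀ j, R j j ≤ 1 := by
    intro j
    rw [hR_one j]
    linarith [hPdiag j]
  have htsum : (n : ℝ) - k ≤ ∑ j, R j j := by
    have h1 : ∑ j, R j j = (n : ℝ) - P.trace := by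
      rw [Finset.sum_congr rfl (fun j _ => hR_one j), Finset.sum_sub_distrib,
        Finset.sum_const, Matrix.trace]
      simp [Matrix.diag]
    rw [h1]
    linarith
  have hRB : R * B = 0 := by
    rw [hR, Matrix.sub_mul, Matrix.one_mul, hPB, sub_self]
  have h2 : R * (Matrix.diagonal σ - B) = R * Matrix.diagonal σ := by
    rw [Matrix.mul_sub, hRB, sub_zero]
  have h3 : frobSq (R * Matrix.diagonal σ) = ∑ j, σ j ^ 2 * R j j := by
    rw [frobSq, Finset.sum_comm]
    apply Finset.sum_congr rfl
    intro j _
    rw [hdiag j, Finset.mul_sum]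
    apply Finset.sum_congr rfl
    intro i _
    rw [Matrix.mul_diagonal]
    ring
  calc ∑ i ∈ Finset.univ.filter (fun i : Fin n => k ≤ (i : ℕ)), σ i ^ 2
      ≤ ∑ j, σ j ^ 2 * R j j :=
        scalar_key hk σ hσdec hσnn (fun j => R j j) ht0 ht1 htsum
    _ = frobSq (R * Matrix.diagonal σ) := h3.symm
    _ = frobSq (R * (Matrix.diagonal σ - B)) := by rw [h2]
    _ ≤ frobSq (Matrix.diagonal σ - B) := frobSq_proj_le P hsym hidem _

theorem eckart_young_best_rank_k (n : ℕ) (hn : 1 ≤ n) (σ : Fin n → ℝ)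
    (hσdec : Antitone σ) (hσnonneg : ∀ i, 0 ≤ σ i)
    (U V : Matrix (Fin n) (Fin n) ℝ) (hU : Uᵀ * U = 1) (hV : Vᵀ * V = 1)
    (k : ℕ) (hk : k ≤ n) :
    IsLeast
      {e : ℝ | ∃ B : Matrix (Fin n) (Fin n) ℝ, B.rank ≤ k ∧
        e = frobSq (U * Matrix.diagonal σ * Vᵀ - B)}
      (∑ i ∈ Finset.univ.filter (fun i : Fin n => k ≤ (i : ℕ)), σ i ^ 2) ∧
    frobSq (U * Matrix.diagonal σ * Vᵀ
        - U * Matrix.diagonal (fun i : Fin n => if (i : ℕ) < k then σ i else 0) * Vᵀ)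
      = ∑ i ∈ Finset.univ.filter (fun i : Fin n => k ≤ (i : ℕ)), σ i ^ 2 := by
  classical
  have hUU : U * Uᵀ = 1 := mul_eq_one_comm.mp hU
  have hVV : V * Vᵀ = 1 := mul_eq_one_comm.mp hV
  set σ' : Fin n → ℝ := fun i => if (i : ℕ) < k then σ i else 0 with hσ'
  set g : Fin n → ℝ := fun i => if (i : ℕ) < k then 0 else σ i with hg
  -- the attained value
  have hval : frobSq (U * Matrix.diagonal σ * Vᵀ - U * Matrix.diagonal σ' * Vᵀ)
      = ∑ i ∈ Finset.univ.filter (fun i : Fin n => k ≤ (i : ℕ)), σ i ^ 2 := by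
    have hdiff : U * Matrix.diagonal σ * Vᵀ - U * Matrix.diagonal σ' * Vᵀ
        = U * Matrix.diagonal g * Vᵀ := by
      have hfun : (fun i : Fin n => σ i - σ' i) = g := by
        funext i
        by_cases hik : (i : ℕ) < k <;> simp [hσ', hg, hik]
      rw [← Matrix.sub_mul, ← Matrix.mul_sub, Matrix.diagonal_sub, hfun]
    rw [hdiff, Matrix.mul_assoc, frobSq_orth_left U _ hU, frobSq_orth_right V _ hV]
    rw [frobSq]
    have hrow : ∀ i : Fin n, ∑ j, (Matrix.diagonal g i j) ^ 2 = g i ^ 2 := by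
      intro i
      rw [Finset.sum_eq_single i]
      · rw [Matrix.diagonal_apply_eq]
      · intro j _ hji
        rw [Matrix.diagonal_apply_ne' _ hji]
        simp
      · intro h; exact absurd (Finset.mem_univ i) h
    rw [Finset.sum_congr rfl (fun i _ => hrow i), Finset.sum_filter]
    apply Finset.sum_congr rfl
    intro i _
    by_cases hik : (i : ℕ) < k
    · simp [hg, hik, Nat.not_le.mpr hik]
    · simp [hg, hik, Nat.not_lt.mp hik]
  refine ⟨⟨⟨U * Matrix.diagonal σ' * Vᵀ, ?_, hval.symm⟩, ?_⟩, hval⟩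
  · -- rank bound for the truncation
    have h1 : (U * Matrix.diagonal σ' * Vᵀ).rank ≤ (Matrix.diagonal σ').rank :=
      le_trans (Matrix.rank_mul_le_left _ _) (Matrix.rank_mul_le_right _ _)
    refine le_trans h1 ?_
    rw [Matrix.rank_diagonal]
    rw [Fintype.card_subtype]
    have hsub : Finset.univ.filter (fun i : Fin n => σ' i ≠ 0)
        ⊆ Finset.univ.filter (fun i : Fin n => (i : ℕ) < k) := by
      intro i hi
      simp only [Finset.mem_filter, Finset.mem_univ, true_and] at hi ⊢
      by_contra hik
      exact hi (by simp [hσ', hik])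
    exact le_trans (Finset.card_le_card hsub) (le_of_eq (card_filter_lt hk))
  · -- lower bound
    rintro e ⟨B, hB, rfl⟩
    have hrw : U * Matrix.diagonal σ * Vᵀ - B
        = U * (Matrix.diagonal σ - Uᵀ * B * V) * Vᵀ := by
      rw [Matrix.mul_sub, Matrix.sub_mul]
      congr 1
      rw [show U * (Uᵀ * B * V) * Vᵀ = (U * Uᵀ) * B * (V * Vᵀ) by
        simp only [Matrix.mul_assoc], hUU, hVV, Matrix.one_mul, Matrix.mul_one]
    rw [hrw, Matrix.mul_assoc, frobSq_orth_left U _ hU, frobSq_orth_right V _ hV]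
    have hrank : (Uᵀ * B * V).rank ≤ k :=
      le_trans (le_trans (Matrix.rank_mul_le_left _ _) (Matrix.rank_mul_le_right _ _)) hB
    exact diag_key hk σ hσdec hσnonneg _ hrank
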